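/- Let X be a real random variable with mean zero and E|X|^{2+θ} ≤ M for some 0 < θ ≤ 1 and M > 0, and let κ > 0. Then |E|t_κ(X) − E t_κ(X)|² − E|X|²| ≤ E[|X|² 1{|X| ≥ κ}] + (E[|X| 1{|X| ≥ κ}])² ≤ κ^{−θ} M + κ^{−2(1+θ)} M². -/

import Mathlib

/-!
Truncation moves `X` towards `0` and changes it only on `{κ ≤ |X|}`. Hence `E X² - E t_κ(X)²`
lies between `0` and `E[X² 1{|X| ≥ κ}]`, and since `E X = 0`,
`|E t_κ(X)| = |E (X - t_κ(X))| ≤ E[|X| 1{|X| ≥ κ}]`; the identity `Var = E t² - (E t)²` combines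
the two. The second inequality is Markov's trick: on `{κ ≤ |X|}`, `|X|^p ≤ κ^(p-2-θ) |X|^(2+θ)`.
-/

open MeasureTheory

/-- The truncation function `t_κ(x) = (x ∧ κ) ∨ (-κ)`. -/
noncomputable def tk (κ x : ℝ) : ℝ := max (min x κ) (-κ)

open ProbabilityTheory
open scoped ENNReal

section Truncation

variable {κ : ℝ}

lemma tk_of_abs_le {x : ℝ} (h : |x| ≤ κ) : tk κ x = x := by
  rw [abs_le] at h
  rw [tk, min_eq_left h.2, max_eq_left h.1]

lemma tk_mem_uIcc (hκ : 0 ≤ κ) (x : ℝ) : tk κ x ∈ Set.uIcc 0 x := by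
  rcases le_total 0 x with hx | hx
  · rw [Set.uIcc_of_le hx]
    exact ⟨le_max_of_le_left (le_min hx hκ), max_le (min_le_left x κ) (by linarith)⟩
  · rw [Set.uIcc_of_ge hx]
    exact ⟨le_max_of_le_left (le_min le_rfl (hx.trans hκ)),
      max_le (min_le_of_left_le hx) (by linarith)⟩

lemma continuous_tk : Continuous (tk κ) := by
  unfold tk
  fun_prop

end Truncation

lemma rpow_le_rpow_sub_mul_rpow {κ x p q : ℝ} (hκ : 0 < κ) (hκx : κ ≤ x) (hpq : p ≤ q) :
    x ^ p ≤ κ ^ (p - q) * x ^ q := by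
  have hx : 0 < x := hκ.trans_le hκx
  calc x ^ p = x ^ (p - q) * x ^ q := by rw [← Real.rpow_add hx, sub_add_cancel]
    _ ≤ κ ^ (p - q) * x ^ q := mul_le_mul_of_nonneg_right
      (Real.rpow_le_rpow_of_nonpos hκ hκx (sub_nonpos.2 hpq)) (by positivity)

section Moments

variable {Ω : Type*} [MeasurableSpace Ω] {μ : Measure Ω} {X : Ω → ℝ}

lemma memLp_of_integrable_abs_rpow [IsFiniteMeasure μ] (hX : AEStronglyMeasurable X μ)
    {p : ℝ≥0∞} {q : ℝ} (hq : 0 < q) (hpq : p ≤ ENNReal.ofReal q)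
    (hint : Integrable (fun ω => |X ω| ^ q) μ) : MemLp X p μ := by
  refine MemLp.mono_exponent ((integrable_norm_rpow_iff hX ?_ ENNReal.ofReal_ne_top).1 ?_) hpq
  · simpa using hq
  · simpa [ENNReal.toReal_ofReal hq.le] using hint

theorem setIntegral_abs_rpow_le_of_le_abs (hX : Measurable X) {κ p q : ℝ} (hκ : 0 < κ)
    (hpq : p ≤ q) (hint : Integrable (fun ω => |X ω| ^ q) μ) :
    ∫ ω in {ω | κ ≤ |X ω|}, |X ω| ^ p ∂μ ≤ κ ^ (p - q) * ∫ ω, |X ω| ^ q ∂μ := by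
  have hS : MeasurableSet {ω | κ ≤ |X ω|} := measurableSet_le measurable_const hX.abs
  calc ∫ ω in {ω | κ ≤ |X ω|}, |X ω| ^ p ∂μ
      ≤ ∫ ω in {ω | κ ≤ |X ω|}, κ ^ (p - q) * |X ω| ^ q ∂μ :=
        integral_mono_of_nonneg (ae_of_all _ fun ω => by positivity)
          (hint.const_mul _).integrableOn
          (ae_restrict_of_forall_mem hS fun ω hω => rpow_le_rpow_sub_mul_rpow hκ hω hpq)
    _ = κ ^ (p - q) * ∫ ω in {ω | κ ≤ |X ω|}, |X ω| ^ q ∂μ := integral_const_mul _ _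
    _ ≤ κ ^ (p - q) * ∫ ω, |X ω| ^ q ∂μ := mul_le_mul_of_nonneg_left
      (setIntegral_le_integral hint (ae_of_all _ fun ω => by positivity)) (by positivity)

theorem abs_variance_sub_integral_sq_le [IsProbabilityMeasure μ] {Y : Ω → ℝ} {S : Set Ω}
    (hX : MemLp X 2 μ) (hY : AEStronglyMeasurable Y μ) (hmean : μ[X] = 0)
    (hYX : ∀ ω, Y ω ∈ Set.uIcc 0 (X ω)) (heq : ∀ ω ∉ S, Y ω = X ω) :
    |Var[Y; μ] - ∫ ω, X ω ^ 2 ∂μ| ≤ (∫ ω in S, X ω ^ 2 ∂μ) + (∫ ω in S, |X ω| ∂μ) ^ 2 := by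
  have habs (ω : Ω) : |Y ω| ≤ |X ω| := by simpa using Set.abs_sub_left_of_mem_uIcc (hYX ω)
  have hdiff (ω : Ω) : |X ω - Y ω| ≤ |X ω| := by simpa using Set.abs_sub_right_of_mem_uIcc (hYX ω)
  have hY2 : MemLp Y 2 μ := hX.of_le hY (ae_of_all _ habs)
  have hX1 := hX.integrable one_le_two
  have hY1 := hY2.integrable one_le_two
  have hloss : ∫ ω, X ω ^ 2 ∂μ - ∫ ω, Y ω ^ 2 ∂μ = ∫ ω in S, (X ω ^ 2 - Y ω ^ 2) ∂μ := by
    rw [← integral_sub hX.integrable_sq hY2.integrable_sq,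
      setIntegral_eq_integral_of_forall_compl_eq_zero fun ω hω => by rw [heq ω hω, sub_self]]
  have hloss_nonneg : 0 ≤ ∫ ω in S, (X ω ^ 2 - Y ω ^ 2) ∂μ :=
    integral_nonneg fun ω => sub_nonneg.2 (sq_le_sq.2 (habs ω))
  have hloss_le : ∫ ω in S, (X ω ^ 2 - Y ω ^ 2) ∂μ ≤ ∫ ω in S, X ω ^ 2 ∂μ :=
    setIntegral_mono (hX.integrable_sq.sub hY2.integrable_sq).integrableOn
      hX.integrable_sq.integrableOn fun ω => sub_le_self _ (sq_nonneg _)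
  have hmeanY : |μ[Y]| ≤ ∫ ω in S, |X ω| ∂μ :=
    calc |μ[Y]| = |∫ ω, (X ω - Y ω) ∂μ| := by rw [integral_sub hX1 hY1, hmean, zero_sub, abs_neg]
      _ ≤ ∫ ω, |X ω - Y ω| ∂μ := abs_integral_le_integral_abs
      _ = ∫ ω in S, |X ω - Y ω| ∂μ := (setIntegral_eq_integral_of_forall_compl_eq_zero
          fun ω hω => by rw [heq ω hω, sub_self, abs_zero]).symm
      _ ≤ ∫ ω in S, |X ω| ∂μ := setIntegral_mono (hX1.sub hY1).abs.integrableOn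
          hX1.abs.integrableOn hdiff
  have hsplit : Var[Y; μ] - ∫ ω, X ω ^ 2 ∂μ
      = -(∫ ω in S, (X ω ^ 2 - Y ω ^ 2) ∂μ + μ[Y] ^ 2) := by
    rw [variance_eq_sub hY2, ← hloss]
    simp only [Pi.pow_apply]
    ring
  rw [hsplit, abs_neg, abs_of_nonneg (by positivity)]
  exact add_le_add hloss_le (sq_le_sq' (abs_le.1 hmeanY).1 (abs_le.1 hmeanY).2)

end Moments

theorem truncated_variance_perturbation_general {Ω : Type*} [MeasurableSpace Ω]
    (P : Measure Ω) [IsProbabilityMeasure P]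
    (X : Ω → ℝ) (hX : Measurable X)
    (θ M : ℝ) (hθ0 : 0 < θ)
    (hmean : ∫ ω, X ω ∂P = 0)
    (hint : Integrable (fun ω => |X ω| ^ (2 + θ)) P)
    (hmom : ∫ ω, |X ω| ^ (2 + θ) ∂P ≤ M)
    (κ : ℝ) (hκ : 0 < κ) :
    |(∫ ω, |tk κ (X ω) - ∫ ω', tk κ (X ω') ∂P| ^ 2 ∂P) - ∫ ω, |X ω| ^ 2 ∂P|
        ≤ (∫ ω in {ω | κ ≤ |X ω|}, |X ω| ^ 2 ∂P)
          + (∫ ω in {ω | κ ≤ |X ω|}, |X ω| ∂P) ^ 2 ∧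
      (∫ ω in {ω | κ ≤ |X ω|}, |X ω| ^ 2 ∂P)
          + (∫ ω in {ω | κ ≤ |X ω|}, |X ω| ∂P) ^ 2
        ≤ κ ^ (-θ) * M + κ ^ (-(2 * (1 + θ))) * M ^ 2 := by
  have hX2 : MemLp X 2 P := memLp_of_integrable_abs_rpow hX.aestronglyMeasurable (by positivity)
    (by rw [← ENNReal.ofReal_ofNat]; exact ENNReal.ofReal_le_ofReal (by linarith)) hint
  have hT : Measurable fun ω => tk κ (X ω) := continuous_tk.measurable.comp hX
  constructor
  · have hvar := abs_variance_sub_integral_sq_le (S := {ω | κ ≤ |X ω|}) hX2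
      hT.aestronglyMeasurable hmean (fun ω => tk_mem_uIcc hκ.le (X ω))
      fun ω hω => tk_of_abs_le (not_le.1 hω).le
    rw [variance_eq_integral hT.aemeasurable] at hvar
    simpa only [sq_abs] using hvar
  · have htail2 := setIntegral_abs_rpow_le_of_le_abs (p := 2) hX hκ (by linarith) hint
    have htail1 := setIntegral_abs_rpow_le_of_le_abs (p := 1) hX hκ (by linarith) hint
    simp only [Real.rpow_two, Real.rpow_one] at htail1 htail2
    rw [show (2 : ℝ) - (2 + θ) = -θ by ring] at htail2
    have hexp : κ ^ (-(2 * (1 + θ))) = (κ ^ ((1 : ℝ) - (2 + θ))) ^ 2 := by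
      rw [← Real.rpow_mul_natCast hκ.le]
      ring_nf
    rw [hexp, ← mul_pow]
    exact add_le_add (htail2.trans (by gcongr))
      (pow_le_pow_left₀ (integral_nonneg fun ω => abs_nonneg _) (htail1.trans (by gcongr)) 2)

/-- For a centered real random variable `X` with `E|X|^(2+θ) ≤ M`
(`0 < θ ≤ 1`, `M > 0`) and `κ > 0`, the variance of the truncation `t_κ(X)` differs
from `E|X|²` by at most `E[|X|² 1{|X| ≥ κ}] + (E[|X| 1{|X| ≥ κ}])²`, which in turn is at
most `κ^(-θ) M + κ^(-2(1+θ)) M²`. -/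
theorem truncated_variance_perturbation {Ω : Type*} [MeasurableSpace Ω]
    (P : Measure Ω) [IsProbabilityMeasure P]
    (X : Ω → ℝ) (hX : Measurable X)
    (θ M : ℝ) (hθ0 : 0 < θ) (hθ1 : θ ≤ 1) (hM : 0 < M)
    (hmean : ∫ ω, X ω ∂P = 0)
    (hint : Integrable (fun ω => |X ω| ^ (2 + θ)) P)
    (hmom : ∫ ω, |X ω| ^ (2 + θ) ∂P ≤ M)
    (κ : ℝ) (hκ : 0 < κ) :
    |(∫ ω, |tk κ (X ω) - ∫ ω', tk κ (X ω') ∂P| ^ 2 ∂P) - ∫ ω, |X ω| ^ 2 ∂P|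
        ≤ (∫ ω in {ω | κ ≤ |X ω|}, |X ω| ^ 2 ∂P)
          + (∫ ω in {ω | κ ≤ |X ω|}, |X ω| ∂P) ^ 2 ∧
      (∫ ω in {ω | κ ≤ |X ω|}, |X ω| ^ 2 ∂P)
          + (∫ ω in {ω | κ ≤ |X ω|}, |X ω| ∂P) ^ 2
        ≤ κ ^ (-θ) * M + κ ^ (-(2 * (1 + θ))) * M ^ 2 :=
  truncated_variance_perturbation_general P X hX θ M hθ0 hmean hint hmom κ hκ
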